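/- Let λ ≠ 0 and let g : [0,1] → ℝ be continuous and satisfy λ·g(t) = ∫₀^{1−t} g(s) ds for all t ∈ [0,1], with g not identically zero. Then λ = (−1)^{(j−1)/2}·2/(π·j) for some odd positive integer j, and g(t) = C·cos(t/λ) for some constant C. -/

import Mathlib

/-!
Differentiating `λ g(t) = ∫₀^{1-t} g` gives `λ g'(t) = -g(1-t)`, so `(g(t), g(1-t))` solves the
rotation system `u' = -v/λ, v' = u/λ` with initial value `(g 0, g 1) = (g 0, 0)`. Uniqueness (the
energy `u² + v²` of the difference with `(g 0 cos(t/λ), g 0 sin(t/λ))` is constant and vanishes at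
`0`) forces `g(t) = g 0 cos(t/λ)` and `g(1-t) = g 0 sin(t/λ)`; at `t = 1` this reads
`g 0 = g 0 sin(1/λ)`, whence `sin(1/λ) = 1` since `g 0 ≠ 0`.
-/

open Set MeasureTheory Real

lemma mapsTo_one_sub_Icc : MapsTo (fun t : ℝ => 1 - t) (Icc 0 1) (Icc 0 1) :=
  fun t ht => ⟨by linarith [ht.2], by linarith [ht.1]⟩

lemma hasDerivWithinAt_integral_of_continuousOn {g : ℝ → ℝ} {a b x : ℝ}
    (hg : ContinuousOn g (Icc a b)) (hx : x ∈ Icc a b) :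
    HasDerivWithinAt (fun y => ∫ s in a..y, g s) (g x) (Icc a b) x := by
  have : Fact (x ∈ Icc a b) := ⟨hx⟩
  exact intervalIntegral.integral_hasDerivWithinAt_right
    ((hg.mono (Icc_subset_Icc le_rfl hx.2)).intervalIntegrable_of_Icc hx.1)
    ⟨Icc a b, self_mem_nhdsWithin, hg.aestronglyMeasurable measurableSet_Icc⟩ (hg x hx)

lemma eq_zero_of_hasDerivWithinAt_rotation {u v : ℝ → ℝ} {a b c : ℝ}
    (hu : ∀ x ∈ Icc a b, HasDerivWithinAt u (-(c * v x)) (Icc a b) x)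
    (hv : ∀ x ∈ Icc a b, HasDerivWithinAt v (c * u x) (Icc a b) x)
    (hua : u a = 0) (hva : v a = 0) : ∀ x ∈ Icc a b, u x = 0 ∧ v x = 0 := by
  intro x hx
  have henergy : ∀ y ∈ Icc a b,
      HasDerivWithinAt (fun t => u t ^ 2 + v t ^ 2) 0 (Icc a b) y := by
    intro y hy
    refine (((hu y hy).pow 2).add ((hv y hy).pow 2)).congr_deriv ?_
    simp only [Nat.cast_ofNat, Nat.add_one_sub_one, pow_one]
    ring
  have hconst := constant_of_has_deriv_right_zero
    (fun y hy => (henergy y hy).continuousWithinAt)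
    (fun y hy => (henergy y (Ico_subset_Icc_self hy)).mono_of_mem_nhdsWithin
      (Icc_mem_nhdsGE_of_mem hy)) x hx
  simp only [hua, hva] at hconst
  constructor <;> nlinarith [sq_nonneg (u x), sq_nonneg (v x)]

lemma exists_odd_eq_of_sin_one_div_eq_one {lam : ℝ} (h : sin (1 / lam) = 1) :
    ∃ j : ℕ, Odd j ∧ 0 < j ∧ lam = (-1 : ℝ) ^ ((j - 1) / 2) * (2 / (π * j)) := by
  obtain ⟨k, hk⟩ := sin_eq_one_iff.1 h
  have hlam : lam = (π / 2 + k * (2 * π))⁻¹ := by rw [hk, one_div, inv_inv]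
  rcases le_or_gt 0 k with hk0 | hk0
  · lift k to ℕ using hk0 with m
    refine ⟨4 * m + 1, ⟨2 * m, by ring⟩, by positivity, ?_⟩
    have hx : π / 2 + ((m : ℤ) : ℝ) * (2 * π) = π * (4 * m + 1) / 2 := by push_cast; ring
    rw [(show Even ((4 * m + 1 - 1) / 2) from ⟨m, by omega⟩).neg_one_pow, hlam, hx, inv_div]
    push_cast
    ring
  · obtain ⟨m, rfl⟩ : ∃ m : ℕ, k = -(m + 1) := ⟨(-k - 1).toNat, by omega⟩
    refine ⟨4 * m + 3, ⟨2 * m + 1, by ring⟩, by positivity, ?_⟩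
    have hx : π / 2 + ((-(m + 1) : ℤ) : ℝ) * (2 * π) = -(π * (4 * m + 3) / 2) := by
      push_cast; ring
    rw [(show Odd ((4 * m + 3 - 1) / 2) from ⟨m, by omega⟩).neg_one_pow, hlam, hx, inv_neg,
      inv_div]
    push_cast
    ring

section IntegralEquation

variable {lam : ℝ} {g : ℝ → ℝ}

lemma hasDerivWithinAt_of_mul_eq_integral (hlam : lam ≠ 0) (hg : ContinuousOn g (Icc 0 1))
    (heq : ∀ t ∈ Icc (0 : ℝ) 1, lam * g t = ∫ s in (0 : ℝ)..(1 - t), g s)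
    {x : ℝ} (hx : x ∈ Icc (0 : ℝ) 1) :
    HasDerivWithinAt g (-(lam⁻¹ * g (1 - x))) (Icc 0 1) x := by
  have hG := (hasDerivWithinAt_integral_of_continuousOn hg (mapsTo_one_sub_Icc hx)).comp x
    ((hasDerivWithinAt_id x _).const_sub 1) mapsTo_one_sub_Icc
  refine ((hG.const_mul lam⁻¹).congr (fun y hy => ?_) ?_).congr_deriv (by ring)
  · simp [← heq y hy, hlam]
  · simp [← heq x hx, hlam]

lemma eq_mul_cos_and_mul_sin_of_mul_eq_integral (hlam : lam ≠ 0)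
    (hg : ContinuousOn g (Icc 0 1))
    (heq : ∀ t ∈ Icc (0 : ℝ) 1, lam * g t = ∫ s in (0 : ℝ)..(1 - t), g s) :
    ∀ t ∈ Icc (0 : ℝ) 1, g t = g 0 * cos (t / lam) ∧ g (1 - t) = g 0 * sin (t / lam) := by
  have hg' : ∀ x ∈ Icc (0 : ℝ) 1, HasDerivWithinAt g (-(lam⁻¹ * g (1 - x))) (Icc 0 1) x :=
    fun x hx => hasDerivWithinAt_of_mul_eq_integral hlam hg heq hx
  have hg1 : g 1 = 0 := by simpa [hlam] using heq 1 ⟨zero_le_one, le_rfl⟩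
  have hscale : ∀ x : ℝ, HasDerivAt (fun t : ℝ => t / lam) lam⁻¹ x := fun x => by
    simpa [one_div] using (hasDerivAt_id x).div_const lam
  have hzero := eq_zero_of_hasDerivWithinAt_rotation (c := lam⁻¹)
    (u := fun t => g t - g 0 * cos (t / lam)) (v := fun t => g (1 - t) - g 0 * sin (t / lam))
    (fun x hx => by
      refine ((hg' x hx).sub (((hscale x).cos.const_mul (g 0)).hasDerivWithinAt)).congr_deriv ?_
      ring)
    (fun x hx => by
      have hflip := (hg' (1 - x) (mapsTo_one_sub_Icc hx)).comp x
        ((hasDerivWithinAt_id x _).const_sub 1) mapsTo_one_sub_Icc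
      refine (hflip.sub (((hscale x).sin.const_mul (g 0)).hasDerivWithinAt)).congr_deriv ?_
      simp only [sub_sub_cancel]
      ring)
    (by simp) (by simp [hg1])
  exact fun t ht => ⟨sub_eq_zero.1 (hzero t ht).1, sub_eq_zero.1 (hzero t ht).2⟩

end IntegralEquation

theorem eigen_123_231_312_equation (lam : ℝ) (hlam : lam ≠ 0) (g : ℝ → ℝ)
    (hg : ContinuousOn g (Set.Icc 0 1))
    (heq : ∀ t ∈ Set.Icc (0 : ℝ) 1, lam * g t = ∫ s in Set.Icc (0 : ℝ) (1 - t), g s)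
    (hnontriv : ∃ t ∈ Set.Icc (0 : ℝ) 1, g t ≠ 0) :
    (∃ j : ℕ, Odd j ∧ 0 < j ∧
        lam = (-1 : ℝ) ^ ((j - 1) / 2) * (2 / (Real.pi * (j : ℝ)))) ∧
    ∃ C : ℝ, ∀ t ∈ Set.Icc (0 : ℝ) 1, g t = C * Real.cos (t / lam) := by
  have heq' : ∀ t ∈ Icc (0 : ℝ) 1, lam * g t = ∫ s in (0 : ℝ)..(1 - t), g s := fun t ht => by
    rw [heq t ht, intervalIntegral.integral_of_le (by linarith [ht.2]),
      integral_Icc_eq_integral_Ioc]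
  have hsol := eq_mul_cos_and_mul_sin_of_mul_eq_integral hlam hg heq'
  have hg0 : g 0 ≠ 0 := by
    obtain ⟨t, ht, hgt⟩ := hnontriv
    rw [(hsol t ht).1] at hgt
    exact left_ne_zero_of_mul hgt
  have hsin : sin (1 / lam) = 1 := by
    have h1 := (hsol 1 ⟨zero_le_one, le_rfl⟩).2
    rw [sub_self] at h1
    exact (mul_eq_left₀ hg0).1 h1.symm
  exact ⟨exists_odd_eq_of_sin_one_div_eq_one hsin, g 0, fun t ht => (hsol t ht).1⟩
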